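/- For the rotated lemniscate r̄² = sin(2θ̄) with θ̄ ∈ [0, π/4], the arc length from the origin to the point with radius r̄ ∈ [0,1] equals ∫_0^r̄ dt/√(1-t⁴). Consequently, sleaf_2 of the arc length l̄ from the origin equals the radial distance r̄. -/

import Mathlib

/-!
In polar form the branch is `θ(r) = arcsin (r²) / 2`, so `θ'(r) = r / √(1 - r⁴)` and the squared
speed `1 + r² θ'(r)²` of `r ↦ (r cos θ(r), r sin θ(r))` equals `1 / (1 - r⁴)`. Hence the arc length
up to radius `r` is `F r = ∫₀ʳ dt / √(1 - t⁴)`. As `F` is strictly increasing on `[0, 1]` with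
`F 1 = π₂ / 2`, any right inverse `sleaf` of `F` on `[0, π₂ / 2]` with values in `[0, 1]` is also a
left inverse, so `sleaf (F r) = r`.
-/

open Real MeasureTheory Set intervalIntegral

theorem deriv_mul_cos_sq_add_deriv_mul_sin_sq {θ : ℝ → ℝ} {θ' t : ℝ} (hθ : HasDerivAt θ θ' t) :
    deriv (fun s => s * cos (θ s)) t ^ 2 + deriv (fun s => s * sin (θ s)) t ^ 2
      = 1 + t ^ 2 * θ' ^ 2 := by
  have hx : HasDerivAt (fun s => s * cos (θ s)) (1 * cos (θ t) + t * (-sin (θ t) * θ')) t :=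
    (hasDerivAt_id t).mul hθ.cos
  have hy : HasDerivAt (fun s => s * sin (θ s)) (1 * sin (θ t) + t * (cos (θ t) * θ')) t :=
    (hasDerivAt_id t).mul hθ.sin
  rw [hx.deriv, hy.deriv]
  linear_combination (1 + t ^ 2 * θ' ^ 2) * cos_sq_add_sin_sq (θ t)

theorem hasDerivAt_arcsin_sq_div_two {t : ℝ} (ht : t ^ 2 ≠ 1) :
    HasDerivAt (fun s => arcsin (s ^ 2) / 2) (t / √(1 - t ^ 4)) t := by
  have hsq : HasDerivAt (fun s : ℝ => s ^ 2) (2 * t) t := by simpa using hasDerivAt_pow 2 t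
  refine (((hasDerivAt_arcsin (by nlinarith) ht).comp (h := fun s : ℝ => s ^ 2) t hsq).div_const
    2).congr_deriv ?_
  rw [← pow_mul]
  ring

theorem lemniscate_speed_eq_one_div_sqrt {t : ℝ} (ht : |t| < 1) :
    √(deriv (fun s => s * cos (arcsin (s ^ 2) / 2)) t ^ 2 +
        deriv (fun s => s * sin (arcsin (s ^ 2) / 2)) t ^ 2)
      = 1 / √(1 - t ^ 4) := by
  have ht2 : t ^ 2 < 1 := by simpa using sq_lt_one_iff_abs_lt_one t |>.mpr ht
  have hpos : 0 < 1 - t ^ 4 := by nlinarith [sq_nonneg t]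
  rw [deriv_mul_cos_sq_add_deriv_mul_sin_sq (hasDerivAt_arcsin_sq_div_two ht2.ne), div_pow,
    sq_sqrt hpos.le, one_div, ← sqrt_inv]
  congr 1
  field_simp
  ring

theorem intervalIntegrable_one_div_sqrt_one_sub_pow_four {a b : ℝ} (ha : a ∈ Icc (0 : ℝ) 1)
    (hb : b ∈ Icc (0 : ℝ) 1) :
    IntervalIntegrable (fun t : ℝ => 1 / √(1 - t ^ 4)) volume a b := by
  suffices h01 : IntervalIntegrable (fun t : ℝ => 1 / √(1 - t ^ 4)) volume 0 1 from
    h01.mono_set (by rw [uIcc_of_le zero_le_one]; exact uIcc_subset_Icc ha hb)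
  have hsing : IntervalIntegrable (fun t : ℝ => (1 - t) ^ (-(1 / 2) : ℝ)) volume 0 1 := by
    simpa using
      ((intervalIntegrable_rpow' (a := 0) (b := 1) (r := -(1 / 2)) (by norm_num)).comp_sub_left 1).symm
  refine hsing.mono_fun (by fun_prop : Measurable _).aestronglyMeasurable ?_
  -- `1 - t⁴ ≥ 1 - t` on `[0, 1]`, so the integrand is dominated by `(1 - t)^(-1/2)`
  rw [uIoc_of_le zero_le_one, Filter.EventuallyLE, ← Measure.restrict_congr_set Ioo_ae_eq_Ioc]
  refine ae_restrict_of_forall_mem measurableSet_Ioo fun t ⟨ht0, ht1⟩ => ?_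
  have hle : 1 - t ≤ 1 - t ^ 4 := by
    linarith [pow_le_of_le_one ht0.le ht1.le (by norm_num : 4 ≠ 0)]
  have hpos : 0 < 1 - t := by linarith
  rw [norm_of_nonneg (by positivity), norm_of_nonneg (by positivity), rpow_neg hpos.le,
    ← sqrt_eq_rpow, one_div]
  exact inv_anti₀ (sqrt_pos.mpr hpos) (sqrt_le_sqrt hle)

theorem strictMonoOn_integral_one_div_sqrt_one_sub_pow_four :
    StrictMonoOn (fun r => ∫ t in (0 : ℝ)..r, 1 / √(1 - t ^ 4)) (Icc 0 1) := by
  intro a ha b hb hab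
  have h0 : (0 : ℝ) ∈ Icc 0 1 := ⟨le_rfl, zero_le_one⟩
  refine sub_pos.mp ?_
  rw [integral_interval_sub_left (intervalIntegrable_one_div_sqrt_one_sub_pow_four h0 hb)
    (intervalIntegrable_one_div_sqrt_one_sub_pow_four h0 ha)]
  refine intervalIntegral_pos_of_pos_on (intervalIntegrable_one_div_sqrt_one_sub_pow_four ha hb)
    (fun t ht => ?_) hab
  have ht0 : 0 ≤ t := ha.1.trans ht.1.le
  have : t ^ 4 < 1 := pow_lt_one₀ ht0 (ht.2.trans_le hb.2) (by norm_num)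
  have : 0 < 1 - t ^ 4 := by linarith
  positivity

theorem lemniscate_arc_length_sleaf (π₂ : ℝ) (hπ : π₂ = 2 * ∫ t in (0:ℝ)..1, 1 / Real.sqrt (1 - t ^ 4))
    (sleaf : ℝ → ℝ)
    (hs : ∀ l ∈ Set.Icc 0 (π₂ / 2), sleaf l ∈ Set.Icc (0:ℝ) 1 ∧
      (∫ t in (0:ℝ)..(sleaf l), 1 / Real.sqrt (1 - t ^ 4)) = l) :
    ∀ r ∈ Set.Icc (0:ℝ) 1,
      (∫ t in (0:ℝ)..r,
        Real.sqrt ((deriv (fun s => s * Real.cos (Real.arcsin (s ^ 2) / 2)) t) ^ 2 +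
          (deriv (fun s => s * Real.sin (Real.arcsin (s ^ 2) / 2)) t) ^ 2))
        = (∫ t in (0:ℝ)..r, 1 / Real.sqrt (1 - t ^ 4)) ∧
      sleaf (∫ t in (0:ℝ)..r, 1 / Real.sqrt (1 - t ^ 4)) = r := by
  intro r hr
  refine ⟨integral_congr_Ioo_of_le hr.1 fun t ht => lemniscate_speed_eq_one_div_sqrt ?_, ?_⟩
  · exact abs_lt.mpr ⟨by linarith [ht.1], ht.2.trans_le hr.2⟩
  set F := fun r => ∫ t in (0 : ℝ)..r, 1 / √(1 - t ^ 4)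
  have hF := strictMonoOn_integral_one_div_sqrt_one_sub_pow_four
  have h0 : (0 : ℝ) ∈ Icc 0 1 := ⟨le_rfl, zero_le_one⟩
  have h1 : (1 : ℝ) ∈ Icc 0 1 := ⟨zero_le_one, le_rfl⟩
  have hFr : F r ∈ Icc 0 (π₂ / 2) := by
    refine ⟨?_, ?_⟩
    · simpa [F] using hF.monotoneOn h0 hr hr.1
    · simpa [F, hπ] using hF.monotoneOn hr h1 hr.2
  obtain ⟨hmem, hinv⟩ := hs (F r) hFr
  exact hF.injOn hmem hr hinv
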